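/- arXiv:1211.1498 — 2 statements merged into one kernel-verified Lean document; each statement's English description precedes it below -/
import Mathlib

section
/- There exist absolute constants 0 < c ≤ C (independent of p, of the sequence λ, and of f) such that for every real p with 1 ≤ p < ∞, every strictly increasing sequence λ : ℤ → ℝ with λ_n → −∞ as n → −∞ and λ_n → +∞ as n → +∞, and every f : ℤ → ℂ, the homogeneous trace seminorm satisfies c·(∑_{n∈ℤ} (λ_{n+1} − λ_n)|f[λ_n,λ_{n+1}]|^p)^{1/p} ≤ ‖f‖_{L^1_p|Λ} ≤ C·(∑_{n∈ℤ} (λ_{n+1} − λ_n)|f[λ_n,λ_{n+1}]|^p)^{1/p}, where both sides are interpreted in [0,∞]. -/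
open MeasureTheory
open scoped ENNReal NNReal

/-- `lam` is a strictly increasing sequence tending to `-∞` at `-∞` and `+∞` at `+∞`. -/
def GoodSeq (lam : ℤ → ℝ) : Prop :=
  StrictMono lam ∧ Filter.Tendsto lam Filter.atBot Filter.atBot ∧
    Filter.Tendsto lam Filter.atTop Filter.atTop

/-- `F` is an admissible `r`-extension of `f : ℤ → ℂ`, with associated `r`-th derivative `G`:
`F` is `(r-1)` times continuously differentiable, `G` is locally integrable,
`F^{(r-1)}(b) - F^{(r-1)}(a) = ∫_a^b G` for all `a ≤ b`, and `F (lam n) = f n` for all `n`. -/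
def AdmissibleExt (r : ℕ) (lam : ℤ → ℝ) (f : ℤ → ℂ) (F G : ℝ → ℂ) : Prop :=
  ContDiff ℝ (r - 1 : ℕ) F ∧ MeasureTheory.LocallyIntegrable G volume ∧
  (∀ a b : ℝ, a ≤ b →
      iteratedDeriv (r - 1) F b - iteratedDeriv (r - 1) F a = ∫ t in a..b, G t) ∧
  (∀ n : ℤ, F (lam n) = f n)

/-- Homogeneous trace seminorm `‖f‖_{L^r_p|Λ}`, valued in `[0,∞]`. -/
noncomputable def traceL (r : ℕ) (p : ℝ) (lam : ℤ → ℝ) (f : ℤ → ℂ) : ℝ≥0∞ :=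
  ⨅ (F : ℝ → ℂ) (G : ℝ → ℂ) (_ : AdmissibleExt r lam f F G),
    (∫⁻ t, ENNReal.ofReal (‖G t‖ ^ p)) ^ (1 / p)

/-- Trace norm `‖f‖_{W^r_p|Λ}`, valued in `[0,∞]`. -/
noncomputable def traceW (r : ℕ) (p : ℝ) (lam : ℤ → ℝ) (f : ℤ → ℂ) : ℝ≥0∞ :=
  ⨅ (F : ℝ → ℂ) (G : ℝ → ℂ) (_ : AdmissibleExt r lam f F G),
    ((∫⁻ t, ENNReal.ofReal (‖F t‖ ^ p)) +
      (∫⁻ t, ENNReal.ofReal (‖G t‖ ^ p))) ^ (1 / p)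

/-- First order divided difference `f[λ_n, λ_{n+1}]`. -/
noncomputable def dd1 (lam : ℤ → ℝ) (f : ℤ → ℂ) (n : ℤ) : ℂ :=
  (f (n + 1) - f n) / ((lam (n + 1) - lam n : ℝ) : ℂ)

/-- Second order divided difference `f[λ_n, λ_{n+1}, λ_{n+2}]`. -/
noncomputable def dd2 (lam : ℤ → ℝ) (f : ℤ → ℂ) (n : ℤ) : ℂ :=
  (dd1 lam f (n + 1) - dd1 lam f n) / ((lam (n + 2) - lam n : ℝ) : ℂ)

/-- Divided difference `f[λ_n, …, λ_{n+k}]` of order `k`. -/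
noncomputable def ddiv (lam : ℤ → ℝ) (f : ℤ → ℂ) (n : ℤ) (k : ℕ) : ℂ :=
  ∑ i ∈ Finset.range (k + 1),
    f (n + (i : ℤ)) /
      ∏ j ∈ (Finset.range (k + 1)).erase i,
        ((lam (n + (i : ℤ)) - lam (n + (j : ℤ)) : ℝ) : ℂ)

/-- Divided difference of values `v` at (distinct) points `x`. -/
noncomputable def ddPts {m : ℕ} (x : Fin m → ℝ) (v : Fin m → ℂ) : ℂ :=
  ∑ i, v i / ∏ j ∈ Finset.univ.erase i, ((x i - x j : ℝ) : ℂ)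

/-- `F` is of class `W^r` on `[a,b]` with `r`-th derivative `G`. -/
def ClassW (r : ℕ) (a b : ℝ) (F G : ℝ → ℂ) : Prop :=
  ContDiffOn ℝ (r - 1 : ℕ) F (Set.Icc a b) ∧ MeasureTheory.IntegrableOn G (Set.Icc a b) ∧
  ∀ x y : ℝ, a ≤ x → x ≤ y → y ≤ b →
    iteratedDerivWithin (r - 1) F (Set.Icc a b) y -
      iteratedDerivWithin (r - 1) F (Set.Icc a b) x = ∫ t in x..y, G t

/-- `‖f‖_{eq,L}^p`, valued in `[0,∞]`. -/
noncomputable def eqLp (r : ℕ) (p : ℝ) (lam : ℤ → ℝ) (f : ℤ → ℂ) : ℝ≥0∞ :=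
  ∑' n : ℤ, ENNReal.ofReal ((lam (n + (r : ℤ)) - lam n) * ‖ddiv lam f n r‖ ^ p)

/-- `‖f‖_{eq,W}^p`, valued in `[0,∞]`. -/
noncomputable def eqWp (r : ℕ) (p : ℝ) (lam : ℤ → ℝ) (f : ℤ → ℂ) : ℝ≥0∞ :=
  eqLp r p lam f +
    ∑ j ∈ Finset.range r, ∑' n : ℤ,
      ENNReal.ofReal ((lam (n + (r : ℤ)) - lam n) ^ ((j : ℝ) * p + 1) *
        ‖ddiv lam f n j‖ ^ p)

/-- The cubic `q(x) = 4(x² - x³)`. -/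
noncomputable def qcub : ℝ → ℝ := fun x => 4 * (x ^ 2 - x ^ 3)

/-- `α_n(f) = (h_n f[λ_{n-1},λ_n] + h_{n-1} f[λ_n,λ_{n+1}])/(h_{n-1}+h_n)`. -/
noncomputable def alphaN (lam : ℤ → ℝ) (f : ℤ → ℂ) (n : ℤ) : ℂ :=
  (((lam (n + 1) - lam n : ℝ) : ℂ) * dd1 lam f (n - 1) +
      ((lam n - lam (n - 1) : ℝ) : ℂ) * dd1 lam f n) /
    ((lam (n + 1) - lam (n - 1) : ℝ) : ℂ)

/-- The formula for `Φ₁ f` on `[λ_n, λ_{n+1}]`. -/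
noncomputable def phi1P (lam : ℤ → ℝ) (f : ℤ → ℂ) (n : ℤ) (x : ℝ) : ℂ :=
  f n * (((lam (n + 1) - x) / (lam (n + 1) - lam n) : ℝ) : ℂ) +
    f (n + 1) * (((x - lam n) / (lam (n + 1) - lam n) : ℝ) : ℂ)

/-- The formula for `Φ₂ f` on `[μ_{n-1}, λ_n]`. -/
noncomputable def phi2L (lam : ℤ → ℝ) (f : ℤ → ℂ) (n : ℤ) (x : ℝ) : ℂ :=
  f n + alphaN lam f n * ((x - lam n : ℝ) : ℂ) +
    (((lam n - lam (n - 1)) ^ 2 : ℝ) : ℂ) * dd2 lam f (n - 1) *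
      ((qcub ((lam n - x) / (lam n - lam (n - 1))) : ℝ) : ℂ)

/-- The formula for `Φ₂ f` on `[λ_n, μ_n]`. -/
noncomputable def phi2R (lam : ℤ → ℝ) (f : ℤ → ℂ) (n : ℤ) (x : ℝ) : ℂ :=
  f n + alphaN lam f n * ((x - lam n : ℝ) : ℂ) +
    (((lam (n + 1) - lam n) ^ 2 : ℝ) : ℂ) * dd2 lam f (n - 1) *
      ((qcub ((x - lam n) / (lam (n + 1) - lam n)) : ℝ) : ℂ)

/-!
The mean of `F'` over `[λ_n, λ_{n+1}]` is `f[λ_n, λ_{n+1}]`, so Jensen's inequality gives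
`h_n |f[λ_n, λ_{n+1}]|^p ≤ ∫_{λ_n}^{λ_{n+1}} |F'|^p`; summing over `n` bounds the discrete
seminorm by `‖F'‖_p`. Equality is attained by the piecewise linear interpolant of `f`, whose
derivative is the step function equal to `f[λ_n, λ_{n+1}]` on `(λ_n, λ_{n+1}]`. Hence
`‖f‖_{L^1_p|Λ}` is exactly the discrete seminorm, and `c = C = 1` works.
-/

open Set

theorem lintegral_eq_tsum_setLIntegral_fiber {α ι : Type*} [MeasurableSpace α] [MeasurableSpace ι]
    [Countable ι] [MeasurableSingletonClass ι] {μ : Measure α} {i : α → ι} (hi : Measurable i)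
    (g : α → ℝ≥0∞) : ∫⁻ x, g x ∂μ = ∑' n, ∫⁻ x in i ⁻¹' {n}, g x ∂μ := by
  rw [← lintegral_iUnion (fun n => hi (measurableSet_singleton n)) (pairwise_disjoint_fiber i),
    ← preimage_iUnion, iUnion_of_singleton, preimage_univ, setLIntegral_univ]

theorem enorm_integral_rpow_le {α E : Type*} [MeasurableSpace α] [NormedAddCommGroup E]
    [NormedSpace ℝ E] {μ : Measure α} {p : ℝ} (hp : 1 ≤ p) {G : α → E}
    (hG : AEStronglyMeasurable G μ) :
    ‖∫ x, G x ∂μ‖ₑ ^ p ≤ μ univ ^ (p - 1) * ∫⁻ x, ‖G x‖ₑ ^ p ∂μ := by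
  have hp0 : 0 < p := by linarith
  have h1 : ‖∫ x, G x ∂μ‖ₑ ≤ eLpNorm G 1 μ :=
    (enorm_integral_le_lintegral_enorm G).trans_eq eLpNorm_one_eq_lintegral_enorm.symm
  have h2 := eLpNorm_le_eLpNorm_mul_rpow_measure_univ (p := 1) (q := ENNReal.ofReal p)
    (by simpa using hp) hG
  rw [eLpNorm_eq_lintegral_rpow_enorm_toReal (by simpa using hp0) ENNReal.ofReal_ne_top,
    ENNReal.toReal_ofReal hp0.le, ENNReal.toReal_one, div_one] at h2
  calc ‖∫ x, G x ∂μ‖ₑ ^ p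
      ≤ ((∫⁻ x, ‖G x‖ₑ ^ p ∂μ) ^ (1 / p) * μ univ ^ (1 - 1 / p)) ^ p :=
        ENNReal.rpow_le_rpow (h1.trans h2) hp0.le
    _ = μ univ ^ (p - 1) * ∫⁻ x, ‖G x‖ₑ ^ p ∂μ := by
        rw [ENNReal.mul_rpow_of_nonneg _ _ hp0.le, ← ENNReal.rpow_mul, ← ENNReal.rpow_mul,
          one_div_mul_cancel hp0.ne', ENNReal.rpow_one, sub_mul, one_div_mul_cancel hp0.ne',
          one_mul, mul_comm]

theorem ofReal_mul_norm_div_rpow_le_setLIntegral {p : ℝ} (hp : 1 ≤ p) {G : ℝ → ℂ}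
    (hG : AEStronglyMeasurable G volume) {a b : ℝ} (hab : a < b) :
    ENNReal.ofReal ((b - a) * ‖(∫ t in a..b, G t) / ((b - a : ℝ) : ℂ)‖ ^ p) ≤
      ∫⁻ t in Ioc a b, ENNReal.ofReal (‖G t‖ ^ p) := by
  have hp0 : 0 < p := by linarith
  have hba : 0 < b - a := by linarith
  set z := ∫ t in a..b, G t
  have hJensen := enorm_integral_rpow_le hp hG.restrict (μ := volume.restrict (Ioc a b))
  rw [← intervalIntegral.integral_of_le hab.le, Measure.restrict_apply_univ, Real.volume_Ioc]
    at hJensen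
  have hlhs : (b - a) * ‖z / ((b - a : ℝ) : ℂ)‖ ^ p = ‖z‖ ^ p / (b - a) ^ (p - 1) := by
    rw [norm_div, Complex.norm_real, Real.norm_of_nonneg hba.le,
      Real.div_rpow (norm_nonneg _) hba.le, Real.rpow_sub hba, Real.rpow_one]
    field_simp
  rw [hlhs, ENNReal.ofReal_div_of_pos (Real.rpow_pos_of_pos hba _),
    ← ENNReal.ofReal_rpow_of_nonneg (norm_nonneg _) hp0.le, ofReal_norm,
    ← ENNReal.ofReal_rpow_of_nonneg hba.le (by linarith)]
  refine ENNReal.div_le_of_le_mul' (hJensen.trans_eq ?_)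
  congr 1
  refine lintegral_congr fun t => ?_
  rw [← ofReal_norm, ENNReal.ofReal_rpow_of_nonneg (norm_nonneg _) hp0.le]

theorem Monotone.locallyIntegrable_comp {E : Type*} [NormedAddCommGroup E] {i : ℝ → ℤ}
    (hi : Monotone i) (φ : ℤ → E) : LocallyIntegrable (φ ∘ i) volume := by
  intro x
  refine ⟨Icc (x - 1) (x + 1), Icc_mem_nhds (by linarith) (by linarith), ?_⟩
  have hne : (Finset.Icc (i (x - 1)) (i (x + 1))).Nonempty :=
    Finset.nonempty_Icc.2 (hi (by linarith))
  refine Measure.integrableOn_of_bounded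
    (M := (Finset.Icc (i (x - 1)) (i (x + 1))).sup' hne (‖φ ·‖)) (by simp [Real.volume_Icc])
    (StronglyMeasurable.of_discrete.comp_measurable hi.measurable).aestronglyMeasurable
    ((ae_restrict_iff' measurableSet_Icc).2 (ae_of_all _ fun t ht => ?_))
  exact Finset.le_sup' (‖φ ·‖) (Finset.mem_Icc.2 ⟨hi ht.1, hi ht.2⟩)

theorem MeasureTheory.LocallyIntegrable.intervalIntegrable {E : Type*} [NormedAddCommGroup E]
    {f : ℝ → E} (hf : LocallyIntegrable f volume) (a b : ℝ) : IntervalIntegrable f volume a b :=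
  (hf.integrableOn_isCompact isCompact_uIcc).intervalIntegrable

theorem admissibleExt_one_iff {lam : ℤ → ℝ} {f : ℤ → ℂ} {F G : ℝ → ℂ} :
    AdmissibleExt 1 lam f F G ↔ Continuous F ∧ LocallyIntegrable G volume ∧
      (∀ a b : ℝ, a ≤ b → F b - F a = ∫ t in a..b, G t) ∧ ∀ n : ℤ, F (lam n) = f n := by
  simp [AdmissibleExt, contDiff_zero]

namespace GoodSeq

variable {lam : ℤ → ℝ}

theorem exists_mem_Ioc (hlam : GoodSeq lam) (x : ℝ) : ∃ n, x ∈ Ioc (lam n) (lam (n + 1)) := by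
  obtain ⟨-, hbot, htop⟩ := hlam
  obtain ⟨N, hN⟩ := Filter.eventually_atTop.1 (htop.eventually_ge_atTop x)
  obtain ⟨M, hM⟩ := Filter.eventually_atBot.1 (hbot.eventually_lt_atBot x)
  obtain ⟨n, hn, hmax⟩ := Int.exists_greatest_of_bdd (P := fun n => lam n < x)
    ⟨N, fun m hm => not_lt.1 fun h => (hN m h.le).not_gt hm⟩ ⟨M, hM M le_rfl⟩
  exact ⟨n, hn, not_lt.1 fun h => (hmax _ h).not_gt (Int.lt_succ n)⟩

theorem eq_of_mem_Ioc (hlam : GoodSeq lam) {x : ℝ} {m n : ℤ}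
    (hm : x ∈ Ioc (lam m) (lam (m + 1))) (hn : x ∈ Ioc (lam n) (lam (n + 1))) : m = n := by
  have key : ∀ {m n : ℤ}, x ∈ Ioc (lam m) (lam (m + 1)) → x ∈ Ioc (lam n) (lam (n + 1)) →
      ¬ m < n := fun hm hn hlt => (hm.2.trans (hlam.1.monotone hlt)).not_gt hn.1
  exact le_antisymm (not_lt.1 (key hn hm)) (not_lt.1 (key hm hn))

noncomputable def index (hlam : GoodSeq lam) (x : ℝ) : ℤ := (hlam.exists_mem_Ioc x).choose

theorem index_eq_iff (hlam : GoodSeq lam) {x : ℝ} {n : ℤ} :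
    hlam.index x = n ↔ x ∈ Ioc (lam n) (lam (n + 1)) :=
  ⟨fun h => h ▸ (hlam.exists_mem_Ioc x).choose_spec,
    hlam.eq_of_mem_Ioc (hlam.exists_mem_Ioc x).choose_spec⟩

theorem mem_Ioc_index (hlam : GoodSeq lam) (x : ℝ) :
    x ∈ Ioc (lam (hlam.index x)) (lam (hlam.index x + 1)) :=
  hlam.index_eq_iff.1 rfl

theorem preimage_index_singleton (hlam : GoodSeq lam) (n : ℤ) :
    hlam.index ⁻¹' {n} = Ioc (lam n) (lam (n + 1)) :=
  ext fun _ => hlam.index_eq_iff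

theorem monotone_index (hlam : GoodSeq lam) : Monotone hlam.index := by
  intro x y hxy
  by_contra! h
  exact (hlam.1.monotone (Int.add_one_le_iff.2 h)).not_gt
    ((hlam.mem_Ioc_index x).1.trans_le (hxy.trans (hlam.mem_Ioc_index y).2))

theorem lintegral_eq_tsum_setLIntegral_Ioc (hlam : GoodSeq lam) (g : ℝ → ℝ≥0∞) :
    ∫⁻ t, g t = ∑' n, ∫⁻ t in Ioc (lam n) (lam (n + 1)), g t := by
  rw [lintegral_eq_tsum_setLIntegral_fiber hlam.monotone_index.measurable g]
  simp only [hlam.preimage_index_singleton]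

noncomputable def chordSlope (hlam : GoodSeq lam) (f : ℤ → ℂ) (x : ℝ) : ℂ :=
  dd1 lam f (hlam.index x)

/-- Defined as a primitive of `chordSlope`, so that continuity and the fundamental theorem of
calculus are immediate; `linearInterp_lam` shows it interpolates `f`. -/
noncomputable def linearInterp (hlam : GoodSeq lam) (f : ℤ → ℂ) (x : ℝ) : ℂ :=
  f 0 + ∫ t in lam 0..x, hlam.chordSlope f t

theorem locallyIntegrable_chordSlope (hlam : GoodSeq lam) (f : ℤ → ℂ) :
    LocallyIntegrable (hlam.chordSlope f) volume :=
  hlam.monotone_index.locallyIntegrable_comp (dd1 lam f)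

theorem integral_chordSlope (hlam : GoodSeq lam) (f : ℤ → ℂ) (n : ℤ) :
    ∫ t in lam n..lam (n + 1), hlam.chordSlope f t = f (n + 1) - f n := by
  have hlt : lam n < lam (n + 1) := hlam.1 (Int.lt_succ n)
  have hconst : ∀ t ∈ uIoc (lam n) (lam (n + 1)), hlam.chordSlope f t = dd1 lam f n :=
    fun t ht => congrArg (dd1 lam f) (hlam.index_eq_iff.2 (uIoc_of_le hlt.le ▸ ht))
  rw [intervalIntegral.integral_congr_ae (ae_of_all _ hconst), intervalIntegral.integral_const,
    Complex.real_smul, dd1, mul_div_cancel₀]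
  exact Complex.ofReal_ne_zero.2 (sub_pos.2 hlt).ne'

theorem linearInterp_sub (hlam : GoodSeq lam) (f : ℤ → ℂ) (a b : ℝ) :
    hlam.linearInterp f b - hlam.linearInterp f a = ∫ t in a..b, hlam.chordSlope f t := by
  have hint := (hlam.locallyIntegrable_chordSlope f).intervalIntegrable
  rw [linearInterp, linearInterp, add_sub_add_left_eq_sub,
    intervalIntegral.integral_interval_sub_left (hint _ _) (hint _ _)]

theorem linearInterp_lam (hlam : GoodSeq lam) (f : ℤ → ℂ) (n : ℤ) :
    hlam.linearInterp f (lam n) = f n := by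
  have step : ∀ k : ℤ, hlam.linearInterp f (lam (k + 1)) - hlam.linearInterp f (lam k) =
      f (k + 1) - f k := fun k => by
    rw [linearInterp_sub, integral_chordSlope]
  induction n using Int.induction_on with
  | zero => simp [linearInterp]
  | succ k ih => linear_combination step k + ih
  | pred k ih =>
    have := step (-k - 1)
    rw [sub_add_cancel] at this
    linear_combination ih - this

theorem admissibleExt_linearInterp (hlam : GoodSeq lam) (f : ℤ → ℂ) :
    AdmissibleExt 1 lam f (hlam.linearInterp f) (hlam.chordSlope f) := by
  refine admissibleExt_one_iff.2 ⟨?_, hlam.locallyIntegrable_chordSlope f,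
    fun a b _ => hlam.linearInterp_sub f a b, hlam.linearInterp_lam f⟩
  exact continuous_const.add (intervalIntegral.continuous_primitive
    (hlam.locallyIntegrable_chordSlope f).intervalIntegrable _)

theorem lintegral_chordSlope (hlam : GoodSeq lam) (f : ℤ → ℂ) (p : ℝ) :
    ∫⁻ t, ENNReal.ofReal (‖hlam.chordSlope f t‖ ^ p) =
      ∑' n : ℤ, ENNReal.ofReal ((lam (n + 1) - lam n) * ‖dd1 lam f n‖ ^ p) := by
  rw [hlam.lintegral_eq_tsum_setLIntegral_Ioc]
  refine tsum_congr fun n => ?_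
  have hconst : EqOn (fun t => ENNReal.ofReal (‖hlam.chordSlope f t‖ ^ p))
      (fun _ => ENNReal.ofReal (‖dd1 lam f n‖ ^ p)) (Ioc (lam n) (lam (n + 1))) :=
    fun t ht => by simp only [chordSlope, hlam.index_eq_iff.2 ht]
  rw [setLIntegral_congr_fun measurableSet_Ioc hconst,
    setLIntegral_const, Real.volume_Ioc, ← ENNReal.ofReal_mul (by positivity), mul_comm]

theorem tsum_le_lintegral_of_admissibleExt (hlam : GoodSeq lam) {f : ℤ → ℂ} {p : ℝ} (hp : 1 ≤ p)
    {F G : ℝ → ℂ} (h : AdmissibleExt 1 lam f F G) :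
    ∑' n : ℤ, ENNReal.ofReal ((lam (n + 1) - lam n) * ‖dd1 lam f n‖ ^ p) ≤
      ∫⁻ t, ENNReal.ofReal (‖G t‖ ^ p) := by
  obtain ⟨-, hG, hFTC, hF⟩ := admissibleExt_one_iff.1 h
  rw [hlam.lintegral_eq_tsum_setLIntegral_Ioc]
  refine ENNReal.tsum_le_tsum fun n => ?_
  have hlt : lam n < lam (n + 1) := hlam.1 (Int.lt_succ n)
  rw [dd1, ← hF, ← hF, hFTC _ _ hlt.le]
  exact ofReal_mul_norm_div_rpow_le_setLIntegral hp hG.aestronglyMeasurable hlt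

theorem traceL_one_eq (hlam : GoodSeq lam) (f : ℤ → ℂ) {p : ℝ} (hp : 1 ≤ p) :
    traceL 1 p lam f =
      (∑' n : ℤ, ENNReal.ofReal ((lam (n + 1) - lam n) * ‖dd1 lam f n‖ ^ p)) ^ (1 / p) :=
  le_antisymm
    ((iInf₂_le _ _).trans ((iInf_le _ (hlam.admissibleExt_linearInterp f)).trans_eq
      (by rw [lintegral_chordSlope])))
    (le_iInf₂ fun _ _ => le_iInf fun h => ENNReal.rpow_le_rpow
      (hlam.tsum_le_lintegral_of_admissibleExt hp h) (by positivity))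

end GoodSeq

/-- equivalence of the homogeneous trace seminorm `‖·‖_{L^1_p|Λ}` with the
discrete seminorm `(∑_n (λ_{n+1}-λ_n)|f[λ_n,λ_{n+1}]|^p)^{1/p}`, with absolute constants. -/
theorem stmt0 :
    ∃ c C : ℝ, 0 < c ∧ c ≤ C ∧
      ∀ p : ℝ, 1 ≤ p → ∀ lam : ℤ → ℝ, GoodSeq lam → ∀ f : ℤ → ℂ,
        ENNReal.ofReal c *
            (∑' n : ℤ, ENNReal.ofReal ((lam (n + 1) - lam n) *
              ‖dd1 lam f n‖ ^ p)) ^ (1 / p) ≤ traceL 1 p lam f ∧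
        traceL 1 p lam f ≤
          ENNReal.ofReal C *
            (∑' n : ℤ, ENNReal.ofReal ((lam (n + 1) - lam n) *
              ‖dd1 lam f n‖ ^ p)) ^ (1 / p) := by
  refine ⟨1, 1, one_pos, le_rfl, fun p hp lam hlam f => ?_⟩
  rw [ENNReal.ofReal_one, one_mul, hlam.traceL_one_eq f hp]
  exact ⟨le_rfl, le_rfl⟩
end

section
/- There exist absolute constants 0 < c ≤ C (independent of p, of the sequence λ, and of f) such that for every real p with 1 ≤ p < ∞, every strictly increasing sequence λ : ℤ → ℝ with λ_n → ±∞ as n → ±∞, and every f : ℤ → ℂ, the homogeneous trace seminorm satisfies c·(∑_{n∈ℤ} (λ_{n+2} − λ_n)|f[λ_n,λ_{n+1},λ_{n+2}]|^p)^{1/p} ≤ ‖f‖_{L^2_p|Λ} ≤ C·(∑_{n∈ℤ} (λ_{n+2} − λ_n)|f[λ_n,λ_{n+1},λ_{n+2}]|^p)^{1/p}, both sides interpreted in [0,∞]. -/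
open MeasureTheory
open scoped ENNReal NNReal

/-!
Upper bound: on each `[λₙ, λₙ₊₁]` take the cubic Hermite interpolant of `f` with slope
`f[λₙ,λₙ₊₁] - (λₙ₊₁ - λₙ) f[λₙ₋₁,λₙ,λₙ₊₁]` at `λₙ` and `f[λₙ,λₙ₊₁] + (λₙ₊₁ - λₙ) f[λₙ,λₙ₊₁,λₙ₊₂]`
at `λₙ₊₁`; by the recursion defining `f[λₙ,λₙ₊₁,λₙ₊₂]` these slopes agree at the nodes, so the
pieces glue to a `C¹` extension. On `[λₙ, λₙ₊₁]` its second derivative is a combination of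
`f[λₙ₋₁,λₙ,λₙ₊₁]` and `f[λₙ,λₙ₊₁,λₙ₊₂]` with coefficients in `[-4, 4]`, which gives the
constant `8`.

Lower bound: for any admissible extension `F`, both `f[λₙ,λₙ₊₁]` and `f[λₙ₊₁,λₙ₊₂]` are averages of
`F'` and differ from `F'(λₙ₊₁)` by at most `∫|F''|` over their intervals, so
`(λₙ₊₂ - λₙ) |f[λₙ,λₙ₊₁,λₙ₊₂]| ≤ ∫_{λₙ}^{λₙ₊₂} |F''|`. Hölder's inequality turns this into
`(λₙ₊₂ - λₙ) |f[λₙ,λₙ₊₁,λₙ₊₂]|ᵖ ≤ ∫_{λₙ}^{λₙ₊₂} |F''|ᵖ`, and the intervals `(λₙ, λₙ₊₂]` cover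
each point exactly twice, which gives the constant `1/2`.
-/

open Set Filter Topology Interval

theorem tsum_int_comp_add_one {M : Type*} [AddCommMonoid M] [TopologicalSpace M] (a : ℤ → M) :
    ∑' n, a (n + 1) = ∑' n, a n :=
  (Equiv.addRight 1).tsum_eq a

theorem add_rpow_le_two_rpow_mul {a b p : ℝ} (ha : 0 ≤ a) (hb : 0 ≤ b) (hp : 0 ≤ p) :
    (a + b) ^ p ≤ 2 ^ p * (a ^ p + b ^ p) := by
  wlog hab : b ≤ a generalizing a b
  · rw [add_comm a, add_comm (a ^ p)]; exact this hb ha (le_of_not_ge hab)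
  calc (a + b) ^ p ≤ (2 * a) ^ p := Real.rpow_le_rpow (add_nonneg ha hb) (by linarith) hp
    _ = 2 ^ p * a ^ p := Real.mul_rpow zero_le_two ha
    _ ≤ 2 ^ p * (a ^ p + b ^ p) := by
      gcongr; exact le_add_of_nonneg_right (Real.rpow_nonneg hb p)

theorem lintegral_enorm_rpow_le {α E : Type*} [MeasurableSpace α] [NormedAddCommGroup E]
    {μ : Measure α} {g : α → E} (hg : AEStronglyMeasurable g μ) {p : ℝ} (hp : 1 ≤ p) :
    (∫⁻ a, ‖g a‖ₑ ∂μ) ^ p ≤ μ univ ^ (p - 1) * ∫⁻ a, ‖g a‖ₑ ^ p ∂μ := by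
  have hp0 : 0 < p := zero_lt_one.trans_le hp
  have h := eLpNorm_le_eLpNorm_mul_rpow_measure_univ (ENNReal.one_le_ofReal.2 hp) hg
  rw [eLpNorm_one_eq_lintegral_enorm, eLpNorm_eq_lintegral_rpow_enorm_toReal
      (by simpa using hp0) ENNReal.ofReal_ne_top, ENNReal.toReal_ofReal hp0.le] at h
  calc (∫⁻ a, ‖g a‖ₑ ∂μ) ^ p
      ≤ ((∫⁻ a, ‖g a‖ₑ ^ p ∂μ) ^ (1 / p) * μ univ ^ (1 - 1 / p)) ^ p :=
        ENNReal.rpow_le_rpow (by simpa using h) hp0.le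
    _ = μ univ ^ (p - 1) * ∫⁻ a, ‖g a‖ₑ ^ p ∂μ := by
      rw [ENNReal.mul_rpow_of_nonneg _ _ hp0.le, ← ENNReal.rpow_mul, ← ENNReal.rpow_mul,
        one_div_mul_cancel hp0.ne', ENNReal.rpow_one, mul_comm, sub_mul, one_div_mul_cancel hp0.ne',
        one_mul]

theorem norm_slope_sub_le_integral {E : Type*} [NormedAddCommGroup E] [NormedSpace ℝ E]
    [CompleteSpace E] {F F' G : ℝ → E} (hF : ∀ x, HasDerivAt F (F' x) x) (hF' : Continuous F')
    (hFG : ∀ s t, s ≤ t → F' t - F' s = ∫ u in s..t, G u) (hG : LocallyIntegrable G)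
    {a b c : ℝ} (hab : a < b) (hc : c ∈ Icc a b) :
    ‖slope F a b - F' c‖ ≤ ∫ t in a..b, ‖G t‖ := by
  have hGab : IntegrableOn G (Ioc a b) :=
    (hG.integrableOn_isCompact isCompact_Icc).mono_set Ioc_subset_Icc_self
  have hvar : ∀ t ∈ Ι a b, ‖F' t - F' c‖ ≤ ∫ t in a..b, ‖G t‖ := by
    intro t ht
    rw [uIoc_of_le hab.le] at ht
    have hct : F' t - F' c = ∫ u in c..t, G u := by
      rcases le_total c t with h | h
      · exact hFG c t h
      · rw [intervalIntegral.integral_symm, ← hFG t c h, neg_sub]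
    rw [hct, intervalIntegral.integral_of_le hab.le]
    exact (intervalIntegral.norm_integral_le_integral_norm_uIoc).trans
      (setIntegral_mono_set hGab.norm (ae_of_all _ fun _ => norm_nonneg _) (ae_of_all _
        (Ioc_subset_Ioc (le_min hc.1 ht.1.le) (max_le hc.2 ht.2))))
  have hint : ∫ t in a..b, (F' t - F' c) = F b - F a - (b - a) • F' c := by
    rw [intervalIntegral.integral_sub (hF'.intervalIntegrable a b) intervalIntegrable_const,
      intervalIntegral.integral_eq_sub_of_hasDerivAt (fun x _ => hF x) (hF'.intervalIntegrable a b),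
      intervalIntegral.integral_const]
  have hsub : 0 < b - a := sub_pos.2 hab
  have hslope : slope F a b - F' c = (b - a)⁻¹ • ∫ t in a..b, (F' t - F' c) := by
    rw [hint, slope_def_module, smul_sub (b - a)⁻¹ (F b - F a), smul_smul, inv_mul_cancel₀ hsub.ne',
      one_smul]
  rw [hslope, norm_smul, Real.norm_eq_abs, abs_inv, abs_of_pos hsub, inv_mul_le_iff₀ hsub]
  simpa [abs_of_pos hsub, mul_comm] using intervalIntegral.norm_integral_le_of_norm_le_const hvar

namespace GoodSeq

variable {lam : ℤ → ℝ}

theorem exists_mem_Ico (hl : GoodSeq lam) (x : ℝ) : ∃ n, x ∈ Ico (lam n) (lam (n + 1)) := by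
  obtain ⟨hmono, hbot, htop⟩ := hl
  obtain ⟨a, ha⟩ := (hbot.eventually (eventually_le_atBot x)).exists
  obtain ⟨b, hb⟩ := (htop.eventually (eventually_gt_atTop x)).exists
  obtain ⟨n, hn, hmax⟩ := Int.exists_greatest_of_bdd (P := fun n => lam n ≤ x)
    ⟨b, fun n hn => hmono.le_iff_le.1 (hn.trans hb.le)⟩ ⟨a, ha⟩
  exact ⟨n, hn, lt_of_not_ge fun h => (hmax (n + 1) h).not_gt (lt_add_one n)⟩

theorem pairwise_disjoint_Ico (hl : GoodSeq lam) :
    Pairwise (Function.onFun Disjoint fun n => Ico (lam n) (lam (n + 1))) := by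
  simpa only [Order.succ_eq_add_one] using hl.1.monotone.pairwise_disjoint_on_Ico_succ

theorem iUnion_Ico (hl : GoodSeq lam) : ⋃ n, Ico (lam n) (lam (n + 1)) = univ :=
  eq_univ_of_forall fun x => mem_iUnion.2 (hl.exists_mem_Ico x)

theorem lintegral_eq_tsum_Ico (hl : GoodSeq lam) (g : ℝ → ℝ≥0∞) :
    ∫⁻ t, g t = ∑' n, ∫⁻ t in Ico (lam n) (lam (n + 1)), g t := by
  rw [← lintegral_iUnion (fun _ => measurableSet_Ico) hl.pairwise_disjoint_Ico, hl.iUnion_Ico,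
    Measure.restrict_univ]

theorem lintegral_eq_tsum_Ioc (hl : GoodSeq lam) (g : ℝ → ℝ≥0∞) :
    ∫⁻ t, g t = ∑' n, ∫⁻ t in Ioc (lam n) (lam (n + 1)), g t := by
  simp only [hl.lintegral_eq_tsum_Ico, setLIntegral_congr Ico_ae_eq_Ioc]

variable (hl : GoodSeq lam)

noncomputable def cell (x : ℝ) : ℤ := (hl.exists_mem_Ico x).choose

theorem mem_Ico_cell (x : ℝ) : x ∈ Ico (lam (hl.cell x)) (lam (hl.cell x + 1)) :=
  (hl.exists_mem_Ico x).choose_spec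

theorem cell_eq_of_mem_Ico {x : ℝ} {n : ℤ} (hx : x ∈ Ico (lam n) (lam (n + 1))) :
    hl.cell x = n :=
  hl.pairwise_disjoint_Ico.eq (not_disjoint_iff.2 ⟨x, hl.mem_Ico_cell x, hx⟩)

theorem Icc_cell_mem_nhdsGE (x : ℝ) : Icc (lam (hl.cell x)) (lam (hl.cell x + 1)) ∈ 𝓝[≥] x :=
  mem_of_superset (Ico_mem_nhdsGE_of_mem (hl.mem_Ico_cell x)) Ico_subset_Icc_self

theorem exists_Icc_mem_nhdsLE (hl : GoodSeq lam) (x : ℝ) :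
    ∃ n, Icc (lam n) (lam (n + 1)) ∈ 𝓝[≤] x := by
  obtain ⟨hlo, hhi⟩ := hl.mem_Ico_cell x
  rcases hlo.eq_or_lt with hx | hx
  · refine ⟨hl.cell x - 1, Icc_mem_nhdsLE_of_mem ?_⟩
    rw [sub_add_cancel]
    exact ⟨(hl.1 (sub_one_lt _)).trans_eq hx, hx.ge⟩
  · exact ⟨hl.cell x, Icc_mem_nhdsLE_of_mem ⟨hx, hhi.le⟩⟩

noncomputable def glue {E : Type*} (P : ℤ → ℝ → E) (x : ℝ) : E := P (hl.cell x) x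

variable {E : Type*} {P : ℤ → ℝ → E}

theorem glue_eq_of_mem_Ico {x : ℝ} {n : ℤ} (hx : x ∈ Ico (lam n) (lam (n + 1))) :
    hl.glue P x = P n x := by
  rw [glue, hl.cell_eq_of_mem_Ico hx]

theorem glue_eq_of_mem_Icc (hP : ∀ n, P n (lam (n + 1)) = P (n + 1) (lam (n + 1))) {x : ℝ}
    {n : ℤ} (hx : x ∈ Icc (lam n) (lam (n + 1))) : hl.glue P x = P n x := by
  rcases hx.2.lt_or_eq with hlt | rfl
  · exact hl.glue_eq_of_mem_Ico ⟨hx.1, hlt⟩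
  · rw [hl.glue_eq_of_mem_Ico ⟨le_rfl, hl.1 (lt_add_one _)⟩, hP]

theorem glue_eventuallyEq (hP : ∀ n, P n (lam (n + 1)) = P (n + 1) (lam (n + 1))) {x : ℝ}
    {s : Set ℝ} {n : ℤ} (hn : Icc (lam n) (lam (n + 1)) ∈ 𝓝[s] x) :
    hl.glue P =ᶠ[𝓝[s] x] P n :=
  eventually_of_mem hn fun _ => hl.glue_eq_of_mem_Icc hP

theorem continuous_glue [TopologicalSpace E]
    (hP : ∀ n, P n (lam (n + 1)) = P (n + 1) (lam (n + 1))) (hc : ∀ n, Continuous (P n)) :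
    Continuous (hl.glue P) := by
  refine continuous_iff_continuousAt.2 fun x => continuousAt_iff_continuous_left_right.2 ⟨?_, ?_⟩
  · obtain ⟨n, hn⟩ := hl.exists_Icc_mem_nhdsLE x
    exact (hc n).continuousWithinAt.congr_of_eventuallyEq (hl.glue_eventuallyEq hP hn)
      ((hl.glue_eventuallyEq hP hn).eq_of_nhdsWithin self_mem_Iic)
  · have hn := hl.Icc_cell_mem_nhdsGE x
    exact (hc _).continuousWithinAt.congr_of_eventuallyEq (hl.glue_eventuallyEq hP hn)
      ((hl.glue_eventuallyEq hP hn).eq_of_nhdsWithin self_mem_Ici)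

variable [NormedAddCommGroup E]

theorem hasDerivWithinAt_glue_Ici [NormedSpace ℝ E] {P' : ℤ → ℝ → E}
    (hd : ∀ n x, HasDerivAt (P n) (P' n x) x) (x : ℝ) :
    HasDerivWithinAt (hl.glue P) (hl.glue P' x) (Ici x) x :=
  (hd _ x).hasDerivWithinAt.congr_of_mem
    (fun _ hy => hl.glue_eq_of_mem_Ico hy) (hl.mem_Ico_cell x) |>.mono_of_mem_nhdsWithin
      (Ico_mem_nhdsGE_of_mem (hl.mem_Ico_cell x))

theorem hasDerivAt_glue [NormedSpace ℝ E] {P' : ℤ → ℝ → E}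
    (hP : ∀ n, P n (lam (n + 1)) = P (n + 1) (lam (n + 1)))
    (hP' : ∀ n, P' n (lam (n + 1)) = P' (n + 1) (lam (n + 1)))
    (hd : ∀ n x, HasDerivAt (P n) (P' n x) x) (x : ℝ) :
    HasDerivAt (hl.glue P) (hl.glue P' x) x := by
  obtain ⟨n, hn⟩ := hl.exists_Icc_mem_nhdsLE x
  have hleft : HasDerivWithinAt (hl.glue P) (hl.glue P' x) (Iic x) x := by
    rw [(hl.glue_eventuallyEq hP' hn).eq_of_nhdsWithin self_mem_Iic]
    exact (hd n x).hasDerivWithinAt.congr_of_eventuallyEq (hl.glue_eventuallyEq hP hn)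
      ((hl.glue_eventuallyEq hP hn).eq_of_nhdsWithin self_mem_Iic)
  simpa only [Iic_union_Ici, hasDerivWithinAt_univ] using
    hleft.union (hl.hasDerivWithinAt_glue_Ici hd x)

theorem locallyIntegrable_glue (hc : ∀ n, Continuous (P n)) :
    LocallyIntegrable (hl.glue P) := by
  have hIco : ∀ n, IntegrableOn (hl.glue P) (Ico (lam n) (lam (n + 1))) :=
    fun n => ((hc n).integrableOn_Icc.mono_set Ico_subset_Icc_self).congr_fun
      (fun _ hy => (hl.glue_eq_of_mem_Ico hy).symm) measurableSet_Ico
  intro x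
  set n := hl.cell x
  have hsub : Ioo (lam (n - 1)) (lam (n + 1)) ⊆
      Ico (lam (n - 1)) (lam (n - 1 + 1)) ∪ Ico (lam n) (lam (n + 1)) := by
    rw [sub_add_cancel]
    exact Ioo_subset_Ico_self.trans Ico_subset_Ico_union_Ico
  refine ⟨_, Ioo_mem_nhds ?_ (hl.mem_Ico_cell x).2, ((hIco _).union (hIco n)).mono_set hsub⟩
  exact (hl.1 (sub_one_lt n)).trans_le (hl.mem_Ico_cell x).1

end GoodSeq

section Spline

variable (lam : ℤ → ℝ) (f : ℤ → ℂ)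

-- Hermite form: the chord of `f` plus `(x - λₙ)(x - λₙ₊₁)(v (x - λₙ) + u (x - λₙ₊₁)) / hₙ²`, where
-- `u`, `v` are the prescribed slopes at `λₙ`, `λₙ₊₁` minus the chord slope `f[λₙ,λₙ₊₁]`.
noncomputable def spline (n : ℤ) (x : ℝ) : ℂ :=
  f n + dd1 lam f n * (x - lam n) + (x - lam n) * (x - lam (n + 1)) *
    (dd2 lam f n * (x - lam n) - dd2 lam f (n - 1) * (x - lam (n + 1))) / (lam (n + 1) - lam n)

noncomputable def splineDeriv (n : ℤ) (x : ℝ) : ℂ :=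
  dd1 lam f n + ((x - lam n + (x - lam (n + 1))) *
      (dd2 lam f n * (x - lam n) - dd2 lam f (n - 1) * (x - lam (n + 1))) +
    (x - lam n) * (x - lam (n + 1)) * (dd2 lam f n - dd2 lam f (n - 1))) / (lam (n + 1) - lam n)

noncomputable def splineDeriv2 (n : ℤ) (x : ℝ) : ℂ :=
  (dd2 lam f n * (4 * (x - lam n) + 2 * (x - lam (n + 1))) -
    dd2 lam f (n - 1) * (2 * (x - lam n) + 4 * (x - lam (n + 1)))) / (lam (n + 1) - lam n)

variable {lam f}

theorem hasDerivAt_spline (n : ℤ) (x : ℝ) :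
    HasDerivAt (spline lam f n) (splineDeriv lam f n x) x := by
  have hu : ∀ a : ℝ, HasDerivAt (fun z : ℂ => z - a) 1 x := fun a => (hasDerivAt_id _).sub_const _
  have h := (((hu (lam n)).const_mul (dd1 lam f n)).const_add (f n)).add
    ((((hu (lam n)).mul (hu (lam (n + 1)))).mul
      (((hu (lam n)).const_mul (dd2 lam f n)).sub
        ((hu (lam (n + 1))).const_mul (dd2 lam f (n - 1))))).div_const
      ((lam (n + 1) - lam n : ℝ) : ℂ))
  convert h.comp_ofReal using 1
  · ext y; simp [spline]
  · simp only [splineDeriv, Pi.mul_apply, Pi.sub_apply]; push_cast; ring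

theorem hasDerivAt_splineDeriv (n : ℤ) (x : ℝ) :
    HasDerivAt (splineDeriv lam f n) (splineDeriv2 lam f n x) x := by
  have hu : ∀ a : ℝ, HasDerivAt (fun z : ℂ => z - a) 1 x := fun a => (hasDerivAt_id _).sub_const _
  have h := ((((hu (lam n)).add (hu (lam (n + 1)))).mul
      (((hu (lam n)).const_mul (dd2 lam f n)).sub
        ((hu (lam (n + 1))).const_mul (dd2 lam f (n - 1))))).add
    (((hu (lam n)).mul (hu (lam (n + 1)))).mul_const (dd2 lam f n - dd2 lam f (n - 1))))
  convert ((h.div_const ((lam (n + 1) - lam n : ℝ) : ℂ)).const_add (dd1 lam f n)).comp_ofReal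
    using 1
  · ext y; simp [splineDeriv]
  · simp only [splineDeriv2, Pi.sub_apply, Pi.add_apply]; push_cast; ring

theorem continuous_splineDeriv2 (n : ℤ) : Continuous (splineDeriv2 lam f n) := by
  unfold splineDeriv2; fun_prop

theorem StrictMono.ofReal_sub_ne_zero (hl : StrictMono lam) {m n : ℤ} (h : m < n) :
    ((lam n - lam m : ℝ) : ℂ) ≠ 0 :=
  Complex.ofReal_ne_zero.2 (sub_pos.2 (hl h)).ne'

theorem spline_self (n : ℤ) : spline lam f n (lam n) = f n := by
  simp [spline]

theorem spline_succ (hl : StrictMono lam) (n : ℤ) : spline lam f n (lam (n + 1)) = f (n + 1) := by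
  have h := hl.ofReal_sub_ne_zero (lt_add_one n)
  simp only [spline, dd1, sub_self, mul_zero, zero_mul, zero_div, add_zero]
  push_cast at h ⊢
  field_simp
  ring

theorem splineDeriv_succ (hl : StrictMono lam) (n : ℤ) :
    splineDeriv lam f n (lam (n + 1)) = splineDeriv lam f (n + 1) (lam (n + 1)) := by
  have h₁ := hl.ofReal_sub_ne_zero (lt_add_one n)
  have h₂ := hl.ofReal_sub_ne_zero (by omega : n + 1 < n + 2)
  have h₃ := hl.ofReal_sub_ne_zero (by omega : n < n + 2)
  simp only [splineDeriv, dd2, add_sub_cancel_right, show n + 1 + 1 = n + 2 by ring]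
  push_cast at h₁ h₂ h₃ ⊢
  field_simp
  ring

theorem norm_splineDeriv2_le (hl : StrictMono lam) {n : ℤ} {x : ℝ}
    (hx : x ∈ Icc (lam n) (lam (n + 1))) :
    ‖splineDeriv2 lam f n x‖ ≤ 4 * (‖dd2 lam f (n - 1)‖ + ‖dd2 lam f n‖) := by
  set h := lam (n + 1) - lam n
  have hh : 0 < h := sub_pos.2 (hl (lt_add_one n))
  have hcoef : ∀ a b : ℝ, 0 ≤ a → a ≤ 4 → 0 ≤ b → b ≤ 4 →
      |(a * (x - lam n) + b * (x - lam (n + 1))) / h| ≤ 4 := by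
    intro a b ha ha' hb hb'
    rw [abs_div, abs_of_pos hh, div_le_iff₀ hh, abs_le]
    constructor <;> nlinarith [hx.1, hx.2]
  have hsplit : splineDeriv2 lam f n x =
      (((4 * (x - lam n) + 2 * (x - lam (n + 1))) / h : ℝ) : ℂ) * dd2 lam f n -
        (((2 * (x - lam n) + 4 * (x - lam (n + 1))) / h : ℝ) : ℂ) * dd2 lam f (n - 1) := by
    simp only [splineDeriv2, h]; push_cast; ring
  rw [hsplit]
  refine (norm_sub_le _ _).trans ?_
  simp only [norm_mul, Complex.norm_real, Real.norm_eq_abs]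
  have h₁ := hcoef 4 2 (by norm_num) le_rfl (by norm_num) (by norm_num)
  have h₂ := hcoef 2 4 (by norm_num) (by norm_num) (by norm_num) le_rfl
  nlinarith [norm_nonneg (dd2 lam f n), norm_nonneg (dd2 lam f (n - 1))]

end Spline

noncomputable def dd2Sum (p : ℝ) (lam : ℤ → ℝ) (f : ℤ → ℂ) : ℝ≥0∞ :=
  ∑' n : ℤ, ENNReal.ofReal ((lam (n + 2) - lam n) * ‖dd2 lam f n‖ ^ p)

section

variable {lam : ℤ → ℝ}

theorem admissibleExt_glue_spline (hl : GoodSeq lam) (f : ℤ → ℂ) :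
    AdmissibleExt 2 lam f (hl.glue (spline lam f)) (hl.glue (splineDeriv2 lam f)) := by
  have hP n : spline lam f n (lam (n + 1)) = spline lam f (n + 1) (lam (n + 1)) := by
    rw [spline_succ hl.1, spline_self]
  have hderiv x : HasDerivAt (hl.glue (spline lam f)) (hl.glue (splineDeriv lam f) x) x :=
    hl.hasDerivAt_glue hP (splineDeriv_succ hl.1) hasDerivAt_spline x
  have hcont : Continuous (hl.glue (splineDeriv lam f)) :=
    hl.continuous_glue (splineDeriv_succ hl.1) fun n =>
      continuous_iff_continuousAt.2 fun x => (hasDerivAt_splineDeriv n x).continuousAt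
  have hG := hl.locallyIntegrable_glue (continuous_splineDeriv2 (lam := lam) (f := f))
  have hD : deriv (hl.glue (spline lam f)) = hl.glue (splineDeriv lam f) :=
    funext fun x => (hderiv x).deriv
  refine ⟨contDiff_one_iff_deriv.2 ⟨fun x => (hderiv x).differentiableAt, hD ▸ hcont⟩, hG,
    fun a b hab => ?_, fun n => ?_⟩
  · rw [show 2 - 1 = 1 from rfl, iteratedDeriv_one, hD]
    exact (intervalIntegral.integral_eq_sub_of_hasDeriv_right_of_le hab hcont.continuousOn
      (fun x _ => (hl.hasDerivWithinAt_glue_Ici hasDerivAt_splineDeriv x).mono Ioi_subset_Ici_self)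
      (hG.integrableOn_isCompact isCompact_uIcc).intervalIntegrable).symm
  · rw [hl.glue_eq_of_mem_Ico ⟨le_rfl, hl.1 (lt_add_one n)⟩, spline_self]

theorem setLIntegral_Ico_glue_splineDeriv2_le (hl : GoodSeq lam) (f : ℤ → ℂ) {p : ℝ}
    (hp : 0 ≤ p) (n : ℤ) :
    ∫⁻ t in Ico (lam n) (lam (n + 1)), ENNReal.ofReal (‖hl.glue (splineDeriv2 lam f) t‖ ^ p) ≤
      ENNReal.ofReal (8 ^ p * ((lam (n + 1) - lam n) * ‖dd2 lam f (n - 1)‖ ^ p +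
        (lam (n + 1) - lam n) * ‖dd2 lam f n‖ ^ p)) := by
  have hbound : ∀ t ∈ Ico (lam n) (lam (n + 1)),
      ENNReal.ofReal (‖hl.glue (splineDeriv2 lam f) t‖ ^ p) ≤
        ENNReal.ofReal (8 ^ p * (‖dd2 lam f (n - 1)‖ ^ p + ‖dd2 lam f n‖ ^ p)) := by
    intro t ht
    rw [hl.glue_eq_of_mem_Ico ht]
    refine ENNReal.ofReal_le_ofReal ?_
    calc ‖splineDeriv2 lam f n t‖ ^ p
        ≤ (4 * (‖dd2 lam f (n - 1)‖ + ‖dd2 lam f n‖)) ^ p :=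
          Real.rpow_le_rpow (norm_nonneg _) (norm_splineDeriv2_le hl.1 (Ico_subset_Icc_self ht)) hp
      _ = 4 ^ p * (‖dd2 lam f (n - 1)‖ + ‖dd2 lam f n‖) ^ p :=
          Real.mul_rpow (by norm_num) (by positivity)
      _ ≤ 4 ^ p * (2 ^ p * (‖dd2 lam f (n - 1)‖ ^ p + ‖dd2 lam f n‖ ^ p)) := by
          gcongr; exact add_rpow_le_two_rpow_mul (norm_nonneg _) (norm_nonneg _) hp
      _ = 8 ^ p * (‖dd2 lam f (n - 1)‖ ^ p + ‖dd2 lam f n‖ ^ p) := by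
          rw [← mul_assoc, ← Real.mul_rpow (by norm_num) (by norm_num)]; norm_num
  calc _ ≤ ∫⁻ _ in Ico (lam n) (lam (n + 1)),
        ENNReal.ofReal (8 ^ p * (‖dd2 lam f (n - 1)‖ ^ p + ‖dd2 lam f n‖ ^ p)) :=
        setLIntegral_mono' measurableSet_Ico hbound
    _ = _ := by
      rw [setLIntegral_const, Real.volume_Ico, ← ENNReal.ofReal_mul (by positivity)]
      congr 1; ring

theorem lintegral_glue_splineDeriv2_le (hl : GoodSeq lam) (f : ℤ → ℂ) {p : ℝ} (hp : 0 ≤ p) :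
    ∫⁻ t, ENNReal.ofReal (‖hl.glue (splineDeriv2 lam f) t‖ ^ p) ≤
      ENNReal.ofReal (8 ^ p) * dd2Sum p lam f := by
  set h : ℤ → ℝ := fun n => lam (n + 1) - lam n
  set X : ℤ → ℝ := fun n => ‖dd2 lam f n‖ ^ p
  have hh n : 0 ≤ h n := sub_nonneg.2 (hl.1 (lt_add_one n)).le
  have hX n : 0 ≤ X n := Real.rpow_nonneg (norm_nonneg _) p
  rw [hl.lintegral_eq_tsum_Ico]
  calc _ ≤ ∑' n, ENNReal.ofReal (8 ^ p * (h n * X (n - 1) + h n * X n)) :=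
        ENNReal.tsum_le_tsum (setLIntegral_Ico_glue_splineDeriv2_le hl f hp)
    _ = ENNReal.ofReal (8 ^ p) * (∑' n, ENNReal.ofReal (h (n + 1) * X n) +
          ∑' n, ENNReal.ofReal (h n * X n)) := by
      have hshift : ∑' n, ENNReal.ofReal (h (n + 1) * X n) =
          ∑' n, ENNReal.ofReal (h n * X (n - 1)) := by
        rw [← tsum_int_comp_add_one fun n => ENNReal.ofReal (h n * X (n - 1))]
        simp only [add_sub_cancel_right]
      rw [hshift, ← ENNReal.tsum_add, ← ENNReal.tsum_mul_left]
      refine tsum_congr fun n => ?_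
      rw [← ENNReal.ofReal_add (mul_nonneg (hh n) (hX _)) (mul_nonneg (hh n) (hX n)),
        ← ENNReal.ofReal_mul (by positivity)]
    _ = ENNReal.ofReal (8 ^ p) * dd2Sum p lam f := by
      rw [← ENNReal.tsum_add, dd2Sum]
      congr 1
      refine tsum_congr fun n => ?_
      rw [← ENNReal.ofReal_add (mul_nonneg (hh _) (hX n)) (mul_nonneg (hh n) (hX n))]
      congr 1
      simp only [h, X, show n + 1 + 1 = n + 2 by ring]; ring

theorem traceL_two_le (hl : GoodSeq lam) (f : ℤ → ℂ) {p : ℝ} (hp : 0 < p) :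
    traceL 2 p lam f ≤ ENNReal.ofReal 8 * dd2Sum p lam f ^ (1 / p) :=
  calc traceL 2 p lam f
      ≤ (∫⁻ t, ENNReal.ofReal (‖hl.glue (splineDeriv2 lam f) t‖ ^ p)) ^ (1 / p) :=
        iInf₂_le_of_le _ _ (iInf_le _ (admissibleExt_glue_spline hl f))
    _ ≤ (ENNReal.ofReal (8 ^ p) * dd2Sum p lam f) ^ (1 / p) :=
        ENNReal.rpow_le_rpow (lintegral_glue_splineDeriv2_le hl f hp.le) (by positivity)
    _ = ENNReal.ofReal 8 * dd2Sum p lam f ^ (1 / p) := by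
      rw [ENNReal.mul_rpow_of_nonneg _ _ (by positivity),
        ← ENNReal.ofReal_rpow_of_pos (by norm_num), ← ENNReal.rpow_mul, mul_one_div_cancel hp.ne',
        ENNReal.rpow_one]

theorem dd1_eq_slope {f : ℤ → ℂ} {F : ℝ → ℂ} (hF : ∀ n, F (lam n) = f n) (n : ℤ) :
    dd1 lam f n = slope F (lam n) (lam (n + 1)) := by
  rw [slope_def_module, Complex.real_smul, dd1, hF, hF, div_eq_inv_mul, Complex.ofReal_inv]

theorem norm_dd2_mul_le_integral (hl : StrictMono lam) {f : ℤ → ℂ} {F G : ℝ → ℂ}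
    (hadm : AdmissibleExt 2 lam f F G) (n : ℤ) :
    ‖dd2 lam f n‖ * (lam (n + 2) - lam n) ≤ ∫ t in lam n..lam (n + 2), ‖G t‖ := by
  obtain ⟨hF, hG, hFG, hFf⟩ := hadm
  obtain ⟨hFd, hF'⟩ := contDiff_one_iff_deriv.1 hF
  simp only [show 2 - 1 = 1 from rfl, iteratedDeriv_one] at hFG
  have hslope {a b c : ℝ} (hab : a < b) (hc : c ∈ Icc a b) :=
    norm_slope_sub_le_integral (fun x => (hFd x).hasDerivAt) hF' hFG hG hab hc
  have h₀₁ : lam n < lam (n + 1) := hl (lt_add_one n)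
  have h₁₂ : lam (n + 1) < lam (n + 2) := hl (by omega)
  have hL : 0 < lam (n + 2) - lam n := sub_pos.2 (h₀₁.trans h₁₂)
  have hdd2 : ‖dd2 lam f n‖ * (lam (n + 2) - lam n) = ‖dd1 lam f (n + 1) - dd1 lam f n‖ := by
    rw [dd2, norm_div, Complex.norm_real, Real.norm_of_nonneg hL.le, div_mul_cancel₀ _ hL.ne']
  have hint (a b : ℝ) : IntervalIntegrable (fun t => ‖G t‖) volume a b :=
    (hG.integrableOn_isCompact isCompact_uIcc).intervalIntegrable.norm
  rw [hdd2, ← intervalIntegral.integral_add_adjacent_intervals (hint _ _) (hint _ _),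
    dd1_eq_slope hFf, dd1_eq_slope hFf, show n + 1 + 1 = n + 2 by ring,
    ← sub_sub_sub_cancel_right _ _ (deriv F (lam (n + 1)))]
  exact (norm_sub_le _ _).trans ((add_le_add (hslope h₁₂ (left_mem_Icc.2 h₁₂.le))
    (hslope h₀₁ (right_mem_Icc.2 h₀₁.le))).trans_eq (add_comm _ _))

theorem ofReal_mul_norm_dd2_rpow_le (hl : StrictMono lam) {f : ℤ → ℂ} {F G : ℝ → ℂ}
    (hadm : AdmissibleExt 2 lam f F G) {p : ℝ} (hp : 1 ≤ p) (n : ℤ) :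
    ENNReal.ofReal ((lam (n + 2) - lam n) * ‖dd2 lam f n‖ ^ p) ≤
      ∫⁻ t in Ioc (lam n) (lam (n + 2)), ENNReal.ofReal (‖G t‖ ^ p) := by
  have hp0 : 0 < p := zero_lt_one.trans_le hp
  set L := lam (n + 2) - lam n
  have hL : 0 < L := sub_pos.2 (hl (by omega))
  have hLne : ENNReal.ofReal L ^ (p - 1) ≠ 0 := by positivity
  have hLtop : ENNReal.ofReal L ^ (p - 1) ≠ ⊤ := by finiteness
  have hG := hadm.2.1.integrableOn_isCompact (isCompact_Icc (a := lam n) (b := lam (n + 2)))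
    |>.mono_set Ioc_subset_Icc_self
  have hK : ENNReal.ofReal L * ‖dd2 lam f n‖ₑ ≤ ∫⁻ t in Ioc (lam n) (lam (n + 2)), ‖G t‖ₑ := by
    rw [← ofReal_norm, ← ENNReal.ofReal_mul hL.le, ← ofReal_integral_norm_eq_lintegral_enorm hG,
      mul_comm, ← intervalIntegral.integral_of_le (hl (by omega : n < n + 2)).le]
    exact ENNReal.ofReal_le_ofReal (norm_dd2_mul_le_integral hl hadm n)
  have hJ := lintegral_enorm_rpow_le hG.aestronglyMeasurable hp
  rw [Measure.restrict_apply_univ, Real.volume_Ioc] at hJ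
  have hpow : ENNReal.ofReal L ^ p = ENNReal.ofReal L ^ (p - 1) * ENNReal.ofReal L := by
    conv_lhs => rw [← sub_add_cancel p 1]
    rw [ENNReal.rpow_add _ _ (by positivity) ENNReal.ofReal_ne_top, ENNReal.rpow_one]
  rw [ENNReal.ofReal_mul hL.le, ← ENNReal.ofReal_rpow_of_nonneg (norm_nonneg _) hp0.le, ofReal_norm,
    ← ENNReal.mul_le_mul_iff_right hLne hLtop, ← mul_assoc, ← hpow,
    ← ENNReal.mul_rpow_of_nonneg _ _ hp0.le]
  calc _ ≤ (∫⁻ t in Ioc (lam n) (lam (n + 2)), ‖G t‖ₑ) ^ p := ENNReal.rpow_le_rpow hK hp0.le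
    _ ≤ _ := hJ
    _ = _ := by
      congr 1
      refine lintegral_congr fun t => ?_
      rw [← ofReal_norm, ENNReal.ofReal_rpow_of_nonneg (norm_nonneg _) hp0.le]

theorem dd2Sum_le_two_mul_lintegral (hl : GoodSeq lam) {f : ℤ → ℂ} {F G : ℝ → ℂ}
    (hadm : AdmissibleExt 2 lam f F G) {p : ℝ} (hp : 1 ≤ p) :
    dd2Sum p lam f ≤ 2 * ∫⁻ t, ENNReal.ofReal (‖G t‖ ^ p) := by
  set I : ℤ → ℝ≥0∞ := fun n => ∫⁻ t in Ioc (lam n) (lam (n + 1)), ENNReal.ofReal (‖G t‖ ^ p)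
  have hsplit n :
      ∫⁻ t in Ioc (lam n) (lam (n + 2)), ENNReal.ofReal (‖G t‖ ^ p) = I n + I (n + 1) := by
    have h₁ : lam n ≤ lam (n + 1) := (hl.1 (lt_add_one n)).le
    have h₂ : lam (n + 1) ≤ lam (n + 2) := (hl.1 (by omega)).le
    rw [← Ioc_union_Ioc_eq_Ioc h₁ h₂,
      lintegral_union measurableSet_Ioc (Ioc_disjoint_Ioc_of_le le_rfl)]
    simp only [I, show n + 1 + 1 = n + 2 by ring]
  calc dd2Sum p lam f ≤ ∑' n, (I n + I (n + 1)) :=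
        ENNReal.tsum_le_tsum fun n =>
          (ofReal_mul_norm_dd2_rpow_le hl.1 hadm hp n).trans_eq (hsplit n)
    _ = 2 * ∫⁻ t, ENNReal.ofReal (‖G t‖ ^ p) := by
      rw [ENNReal.tsum_add, tsum_int_comp_add_one I, ← two_mul, hl.lintegral_eq_tsum_Ioc]

theorem le_traceL_two (hl : GoodSeq lam) (f : ℤ → ℂ) {p : ℝ} (hp : 1 ≤ p) :
    ENNReal.ofReal (1 / 2) * dd2Sum p lam f ^ (1 / p) ≤ traceL 2 p lam f := by
  have hp0 : 0 < 1 / p := one_div_pos.2 (zero_lt_one.trans_le hp)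
  refine le_iInf₂ fun F G => le_iInf fun hadm => ?_
  calc ENNReal.ofReal (1 / 2) * dd2Sum p lam f ^ (1 / p)
      ≤ ENNReal.ofReal (1 / 2) * (2 * ∫⁻ t, ENNReal.ofReal (‖G t‖ ^ p)) ^ (1 / p) := by
        gcongr; exact dd2Sum_le_two_mul_lintegral hl hadm hp
    _ ≤ ENNReal.ofReal (1 / 2) * (2 * (∫⁻ t, ENNReal.ofReal (‖G t‖ ^ p)) ^ (1 / p)) := by
        rw [ENNReal.mul_rpow_of_nonneg _ _ hp0.le]
        gcongr
        calc (2 : ℝ≥0∞) ^ (1 / p) ≤ 2 ^ (1 : ℝ) :=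
              ENNReal.rpow_le_rpow_of_exponent_le one_le_two ((div_le_one₀ (by linarith)).2 hp)
          _ = 2 := ENNReal.rpow_one 2
    _ = (∫⁻ t, ENNReal.ofReal (‖G t‖ ^ p)) ^ (1 / p) := by
        rw [← mul_assoc, ← ENNReal.ofReal_ofNat 2, ← ENNReal.ofReal_mul (by norm_num)]; norm_num

end

/-- equivalence of the homogeneous trace seminorm `‖·‖_{L^2_p|Λ}` with the
discrete seminorm `(∑_n (λ_{n+2}-λ_n)|f[λ_n,λ_{n+1},λ_{n+2}]|^p)^{1/p}`, with absolute
constants. -/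
theorem stmt2 :
    ∃ c C : ℝ, 0 < c ∧ c ≤ C ∧
      ∀ p : ℝ, 1 ≤ p → ∀ lam : ℤ → ℝ, GoodSeq lam → ∀ f : ℤ → ℂ,
        ENNReal.ofReal c *
            (∑' n : ℤ, ENNReal.ofReal ((lam (n + 2) - lam n) *
              ‖dd2 lam f n‖ ^ p)) ^ (1 / p) ≤ traceL 2 p lam f ∧
        traceL 2 p lam f ≤
          ENNReal.ofReal C *
            (∑' n : ℤ, ENNReal.ofReal ((lam (n + 2) - lam n) *
              ‖dd2 lam f n‖ ^ p)) ^ (1 / p) := by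
  refine ⟨1 / 2, 8, by norm_num, by norm_num, fun p hp lam hl f => ?_⟩
  exact ⟨le_traceL_two hl f hp, traceL_two_le hl f (zero_lt_one.trans_le hp)⟩
end
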